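/- arXiv:1809.10721 — 6 statements merged into one kernel-verified Lean document; each statement's English description precedes it below -/
import Mathlib

section
/- Let r > 0, R > 0 be real numbers, let A₁ = (x₁, y₁, 0) and A₂ = (x₂, y₂, 0) be two distinct points in the xy-plane of ℝ³ with ‖A₁ − A₂‖ ≥ 2r, and set dᵢ = √(xᵢ² + yᵢ²) for i = 1, 2. Assume 0 < d₁ ≤ R and 0 < d₂ ≤ R. Let T be a real number with 8r²T ≥ R⁴, and for i = 1, 2 let lᵢ be the line through Aᵢ with direction vector vᵢ = (yᵢ, −xᵢ, T). Then l₁ and l₂ are not parallel, and dist(l₁, l₂) ≥ 2r(1 − 1/T). -/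
open Metric MeasureTheory Filter Matrix
open scoped RealInnerProductSpace

noncomputable section

/-- The point (x, y, z) in Euclidean 3-space. -/
def pt (x y z : ℝ) : EuclideanSpace ℝ (Fin 3) :=
  (WithLp.equiv 2 (Fin 3 → ℝ)).symm ![x, y, z]

/-- The line through `P` with direction vector `v`. -/
def line (P v : EuclideanSpace ℝ (Fin 3)) : Set (EuclideanSpace ℝ (Fin 3)) :=
  {p | ∃ t : ℝ, p = P + t • v}

/-- Two direction vectors are parallel if they are scalar multiples of each other. -/
def Parallel3 (v w : EuclideanSpace ℝ (Fin 3)) : Prop :=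
  ∃ c : ℝ, w = c • v ∨ v = c • w

/-- The infinite circular cylinder of axis `l` and radius `ρ`. -/
def cylinder (l : Set (EuclideanSpace ℝ (Fin 3))) (ρ : ℝ) : Set (EuclideanSpace ℝ (Fin 3)) :=
  {p | Metric.infDist p l ≤ ρ}

/-!
The point of `l₁` with parameter `s` minus the point of `l₂` with parameter `t` is
`(Δ + s·J A₁ - t·J A₂, (s - t) T)`, where `Δ = A₁ - A₂` and `J (x, y) = (y, -x)`.
Since `J` is antisymmetric, its horizontal part has inner product `|Δ|² + (s - t) C` with `Δ`,
where `C = x₁y₂ - x₂y₁`, so by Cauchy–Schwarz the squared distance is at least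
`(|Δ|² + δC)² / |Δ|² + δ²T²` with `δ = s - t`. Minimizing over `δ` gives `|Δ|⁴T² / (C² + |Δ|²T²)`,
and `|C| ≤ d₁d₂ ≤ R² ≤ √(8r²T)` together with `|Δ| ≥ 2r` bounds this below by
`4r²T / (T + 2) ≥ 4r²(1 - 1/T)²`. Non-parallelism is read off the third coordinate `T ≠ 0`.
-/

theorem pt_add (x y z x' y' z' : ℝ) : pt x y z + pt x' y' z' = pt (x + x') (y + y') (z + z') := by
  ext i; fin_cases i <;> rfl

theorem pt_sub (x y z x' y' z' : ℝ) : pt x y z - pt x' y' z' = pt (x - x') (y - y') (z - z') := by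
  ext i; fin_cases i <;> rfl

theorem smul_pt (c x y z : ℝ) : c • pt x y z = pt (c * x) (c * y) (c * z) := by
  ext i; fin_cases i <;> rfl

theorem pt_inj {x y z x' y' z' : ℝ} : pt x y z = pt x' y' z' ↔ x = x' ∧ y = y' ∧ z = z' := by
  refine ⟨fun h => ⟨congrArg (· 0) h, congrArg (· 1) h, congrArg (· 2) h⟩, ?_⟩
  rintro ⟨rfl, rfl, rfl⟩
  rfl

theorem norm_pt (x y z : ℝ) : ‖pt x y z‖ = √(x ^ 2 + y ^ 2 + z ^ 2) := by
  rw [EuclideanSpace.norm_eq, Fin.sum_univ_three]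
  simp only [Real.norm_eq_abs, sq_abs]
  rfl

theorem eq_of_pt_eq_smul_pt {x₁ y₁ x₂ y₂ T c : ℝ} (hT : T ≠ 0)
    (h : pt y₂ (-x₂) T = c • pt y₁ (-x₁) T) : pt x₁ y₁ 0 = pt x₂ y₂ 0 := by
  obtain ⟨hy, hx, hc⟩ := pt_inj.mp (h.trans (smul_pt c _ _ _))
  obtain rfl : c = 1 := by
    have : (c - 1) * T = 0 := by linarith
    simpa [sub_eq_zero, hT] using this
  rw [pt_inj]
  exact ⟨by linarith, by linarith, rfl⟩

theorem not_parallel3 {x₁ y₁ x₂ y₂ T : ℝ} (hT : T ≠ 0) (hne : pt x₁ y₁ 0 ≠ pt x₂ y₂ 0) :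
    ¬ Parallel3 (pt y₁ (-x₁) T) (pt y₂ (-x₂) T) := by
  rintro ⟨c, h | h⟩
  · exact hne (eq_of_pt_eq_smul_pt hT h)
  · exact hne (eq_of_pt_eq_smul_pt hT h).symm

theorem mul_add_mul_sq_le (a b c d : ℝ) :
    (a * c + b * d) ^ 2 ≤ (a ^ 2 + b ^ 2) * (c ^ 2 + d ^ 2) := by
  nlinarith [sq_nonneg (a * d - b * c)]

theorem pow_four_mul_sq_le_of_sq_add_mul_le {D C T P δ : ℝ} (hD : 0 < D)
    (h : (D ^ 2 + δ * C) ^ 2 ≤ P * D ^ 2) :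
    D ^ 4 * T ^ 2 ≤ (P + (δ * T) ^ 2) * (C ^ 2 + D ^ 2 * T ^ 2) := by
  set K := C ^ 2 + D ^ 2 * T ^ 2
  have hK : 0 ≤ K := by positivity
  -- `((D² + δC)² + δ²T²D²) K - D⁶T²` is the square `(δK + D²C)²`
  have key : D ^ 2 * (D ^ 4 * T ^ 2) ≤ D ^ 2 * ((P + (δ * T) ^ 2) * K) := by
    nlinarith [mul_le_mul_of_nonneg_right h hK, sq_nonneg (δ * K + D ^ 2 * C)]
  exact le_of_mul_le_mul_left key (by positivity)

theorem sq_mul_sq_mul_le_pow_four_mul {r D C T : ℝ} (hr : 0 ≤ r) (hD : 2 * r ≤ D) (hT : 1 < T)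
    (hC : C ^ 2 ≤ 8 * r ^ 2 * T) :
    4 * r ^ 2 * (T - 1) ^ 2 * (C ^ 2 + D ^ 2 * T ^ 2) ≤ D ^ 4 * T ^ 4 := by
  set e := 4 * r ^ 2
  have he : 0 ≤ D ^ 2 - e := by nlinarith
  calc 4 * r ^ 2 * (T - 1) ^ 2 * (C ^ 2 + D ^ 2 * T ^ 2)
      ≤ e * (T - 1) ^ 2 * (2 * e * T + D ^ 2 * T ^ 2) := by gcongr; linarith
    _ ≤ D ^ 4 * T ^ 4 := by
      have : 0 ≤ T ^ 2 + 2 * T - 1 := by nlinarith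
      have : 0 ≤ 3 * T - 2 := by linarith
      -- expand the difference in powers of `D² - e`
      rw [← sub_nonneg, show D ^ 4 * T ^ 4 - e * (T - 1) ^ 2 * (2 * e * T + D ^ 2 * T ^ 2)
          = T * ((D ^ 2 - e) ^ 2 * T ^ 3 + e * (D ^ 2 - e) * T * (T ^ 2 + 2 * T - 1)
            + e ^ 2 * (3 * T - 2)) by ring]
      positivity

theorem sq_two_mul_one_sub_inv_le {r D C T P δ : ℝ} (hr : 0 < r) (hD : 2 * r ≤ D) (hT : 1 < T)
    (hC : C ^ 2 ≤ 8 * r ^ 2 * T) (h : (D ^ 2 + δ * C) ^ 2 ≤ P * D ^ 2) :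
    (2 * r * (1 - 1 / T)) ^ 2 ≤ P + (δ * T) ^ 2 := by
  have hT0 : 0 < T := by linarith
  have hD0 : 0 < D := by linarith
  have hK : 0 < C ^ 2 + D ^ 2 * T ^ 2 := by positivity
  have hmin := pow_four_mul_sq_le_of_sq_add_mul_le (T := T) hD0 h
  have hsep := sq_mul_sq_mul_le_pow_four_mul hr.le hD hT hC
  have : 4 * r ^ 2 * (T - 1) ^ 2 ≤ (P + (δ * T) ^ 2) * T ^ 2 := by
    refine le_of_mul_le_mul_right ?_ hK
    nlinarith [mul_le_mul_of_nonneg_right hmin (sq_nonneg T)]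
  rw [show (2 * r * (1 - 1 / T)) ^ 2 = 4 * r ^ 2 * (T - 1) ^ 2 / T ^ 2 by field_simp; ring,
    div_le_iff₀ (by positivity)]
  exact this

theorem two_mul_one_sub_inv_le_dist {r T x₁ y₁ x₂ y₂ : ℝ} (hr : 0 < r) (hT : 0 < T)
    (hsep : 2 * r ≤ ‖pt x₁ y₁ 0 - pt x₂ y₂ 0‖) (hC : (x₁ * y₂ - x₂ * y₁) ^ 2 ≤ 8 * r ^ 2 * T)
    (s t : ℝ) :
    2 * r * (1 - 1 / T) ≤
      dist (pt x₁ y₁ 0 + s • pt y₁ (-x₁) T) (pt x₂ y₂ 0 + t • pt y₂ (-x₂) T) := by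
  rcases le_or_gt T 1 with hT1 | hT1
  · have : 1 ≤ 1 / T := one_le_one_div hT hT1
    exact (mul_nonpos_of_nonneg_of_nonpos (by positivity) (by linarith)).trans dist_nonneg
  set D := √((x₁ - x₂) ^ 2 + (y₁ - y₂) ^ 2)
  have hDsq : D ^ 2 = (x₁ - x₂) ^ 2 + (y₁ - y₂) ^ 2 := Real.sq_sqrt (by positivity)
  have hD : 2 * r ≤ D := by simpa [pt_sub, norm_pt] using hsep
  set U := x₁ + s * y₁ - (x₂ + t * y₂)
  set V := y₁ + s * -x₁ - (y₂ + t * -x₂)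
  have hproj : (D ^ 2 + (s - t) * (x₁ * y₂ - x₂ * y₁)) ^ 2 ≤ (U ^ 2 + V ^ 2) * D ^ 2 := by
    have hinner : U * (x₁ - x₂) + V * (y₁ - y₂) = D ^ 2 + (s - t) * (x₁ * y₂ - x₂ * y₁) := by
      rw [hDsq]; ring
    rw [← hinner, hDsq]
    exact mul_add_mul_sq_le U V _ _
  rw [dist_eq_norm, smul_pt, smul_pt, pt_add, pt_add, pt_sub, norm_pt,
    show 0 + s * T - (0 + t * T) = (s - t) * T by ring]
  exact Real.le_sqrt_of_sq_le (sq_two_mul_one_sub_inv_le hr hD hT1 hC hproj)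

theorem stmt_0_general (r R T x₁ y₁ x₂ y₂ d₁ d₂ : ℝ)
    (hr : 0 < r) (hR : 0 < R)
    (hne : pt x₁ y₁ 0 ≠ pt x₂ y₂ 0)
    (hsep : 2 * r ≤ ‖pt x₁ y₁ 0 - pt x₂ y₂ 0‖)
    (hd₁ : d₁ = Real.sqrt (x₁ ^ 2 + y₁ ^ 2))
    (hd₂ : d₂ = Real.sqrt (x₂ ^ 2 + y₂ ^ 2))
    (hd₁R : d₁ ≤ R)
    (hd₂R : d₂ ≤ R)
    (hT : R ^ 4 ≤ 8 * r ^ 2 * T) :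
    ¬ Parallel3 (pt y₁ (-x₁) T) (pt y₂ (-x₂) T) ∧
      ∀ p ∈ line (pt x₁ y₁ 0) (pt y₁ (-x₁) T),
        ∀ q ∈ line (pt x₂ y₂ 0) (pt y₂ (-x₂) T),
          2 * r * (1 - 1 / T) ≤ dist p q := by
  have hT0 : 0 < T := by nlinarith [pow_pos hR 4]
  have hC : (x₁ * y₂ - x₂ * y₁) ^ 2 ≤ 8 * r ^ 2 * T := by
    have hd₁sq : d₁ ^ 2 = x₁ ^ 2 + y₁ ^ 2 := by rw [hd₁]; exact Real.sq_sqrt (by positivity)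
    have hd₂sq : d₂ ^ 2 = x₂ ^ 2 + y₂ ^ 2 := by rw [hd₂]; exact Real.sq_sqrt (by positivity)
    calc (x₁ * y₂ - x₂ * y₁) ^ 2 = (x₁ * y₂ + y₁ * -x₂) ^ 2 := by ring
      _ ≤ (x₁ ^ 2 + y₁ ^ 2) * (y₂ ^ 2 + (-x₂) ^ 2) := mul_add_mul_sq_le _ _ _ _
      _ = (d₁ * d₂) ^ 2 := by rw [mul_pow, hd₁sq, hd₂sq]; ring
      _ ≤ (R * R) ^ 2 := by
        have : 0 ≤ d₁ := hd₁ ▸ Real.sqrt_nonneg _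
        have : 0 ≤ d₂ := hd₂ ▸ Real.sqrt_nonneg _
        gcongr
      _ ≤ 8 * r ^ 2 * T := by linarith
  refine ⟨not_parallel3 hT0.ne' hne, ?_⟩
  rintro p ⟨s, rfl⟩ q ⟨t, rfl⟩
  exact two_mul_one_sub_inv_le_dist hr hT0 hsep hC s t

theorem stmt_0 (r R T x₁ y₁ x₂ y₂ d₁ d₂ : ℝ)
    (hr : 0 < r) (hR : 0 < R)
    (hne : pt x₁ y₁ 0 ≠ pt x₂ y₂ 0)
    (hsep : 2 * r ≤ ‖pt x₁ y₁ 0 - pt x₂ y₂ 0‖)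
    (hd₁ : d₁ = Real.sqrt (x₁ ^ 2 + y₁ ^ 2))
    (hd₂ : d₂ = Real.sqrt (x₂ ^ 2 + y₂ ^ 2))
    (hd₁pos : 0 < d₁) (hd₁R : d₁ ≤ R)
    (hd₂pos : 0 < d₂) (hd₂R : d₂ ≤ R)
    (hT : R ^ 4 ≤ 8 * r ^ 2 * T) :
    ¬ Parallel3 (pt y₁ (-x₁) T) (pt y₂ (-x₂) T) ∧
      ∀ p ∈ line (pt x₁ y₁ 0) (pt y₁ (-x₁) T),
        ∀ q ∈ line (pt x₂ y₂ 0) (pt y₂ (-x₂) T),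
          2 * r * (1 - 1 / T) ≤ dist p q :=
  stmt_0_general r R T x₁ y₁ x₂ y₂ d₁ d₂ hr hR hne hsep hd₁ hd₂ hd₁R hd₂R hT
end
end

section
/- Let R, r be positive real numbers, and let A be a (countable) set of points in the xy-plane of ℝ³ such that the distance between any two distinct points of A is at least 2r and every point of A lies within distance R of the origin. Then for every ε with 0 < ε ≤ 8r²/R⁴ there exists a family of lines {lᵢ}, one through each point Aᵢ ∈ A, such that: (a) no two of the lines are parallel; (b) the cylinders Cᵢ of radius r(1 − ε) with axes lᵢ have pairwise disjoint interiors; and (c) for each i, the volume of Cᵢ ∩ B(R) equals the volume of Cᵢ^⊥ ∩ B(R), where Cᵢ^⊥ is the cylinder of radius r(1 − ε) whose axis is the line through Aᵢ perpendicular to the xy-plane. -/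
open Metric MeasureTheory Filter Matrix
open scoped RealInnerProductSpace

noncomputable section

/-!
Through `a = (x, y, 0)` take the line with direction `(μy, -μx, 1)`, `μ = √ε / R`: the vertical
tilted along the tangent of the circle through `a` about the `z`-axis. For two such lines, the
cross product `n` of their directions satisfies `|⟪a - b, n⟫| = μ |a - b|²` and
`‖n‖² ≤ μ² |a - b|² (1 + μ² |a|²)`, so any two points of the lines are at distance `d` with
`|a - b|² ≤ d² (1 + ε)`. As `|a - b| ≥ 2r` and `(1 - ε)² (1 + ε) < 1`, the lines are more than
`2r(1 - ε)` apart and the closed cylinders are already disjoint.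

Both the tilted direction and `e₃` are orthogonal to `a`, so the reflection exchanging the two
unit directions fixes `a` and the origin; it maps the vertical cylinder and the ball onto the
tilted cylinder and the ball, preserving volume.
-/

local notation "E3" => EuclideanSpace ℝ (Fin 3)

@[simp] lemma pt_apply_zero (x y z : ℝ) : pt x y z 0 = x := rfl
@[simp] lemma pt_apply_one (x y z : ℝ) : pt x y z 1 = y := rfl
@[simp] lemma pt_apply_two (x y z : ℝ) : pt x y z 2 = z := rfl

lemma inner_eq_sum_three (p q : E3) : ⟪p, q⟫ = p 0 * q 0 + p 1 * q 1 + p 2 * q 2 := by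
  simp [PiLp.inner_apply, Fin.sum_univ_three, mul_comm]

lemma norm_sq_eq_sum_three (p : E3) : ‖p‖ ^ 2 = p 0 ^ 2 + p 1 ^ 2 + p 2 ^ 2 := by
  rw [← real_inner_self_eq_norm_sq, inner_eq_sum_three]; ring

lemma dist_sq_eq_sum_three (p q : E3) :
    dist p q ^ 2 = (p 0 - q 0) ^ 2 + (p 1 - q 1) ^ 2 + (p 2 - q 2) ^ 2 := by
  simp [dist_eq_norm, norm_sq_eq_sum_three]

lemma isClosed_line (P v : E3) : IsClosed (line P v) := by
  have : line P v = (P + ·) '' (ℝ ∙ v : Submodule ℝ E3) := by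
    ext q
    simp only [line, Set.mem_ofPred_eq, Set.mem_image, SetLike.mem_coe,
      Submodule.mem_span_singleton, exists_exists_eq_and]
    exact exists_congr fun t => eq_comm
  rw [this]
  exact (Homeomorph.addLeft P).isClosedMap _ (Submodule.closed_of_finiteDimensional _)

lemma line_nonempty (P v : E3) : (line P v).Nonempty := ⟨P, 0, by simp⟩

lemma line_smul {c : ℝ} (hc : c ≠ 0) (P v : E3) : line P (c • v) = line P v := by
  ext q
  constructor
  · rintro ⟨t, rfl⟩; exact ⟨t * c, by rw [smul_smul]⟩
  · rintro ⟨t, rfl⟩; exact ⟨t / c, by rw [smul_smul, div_mul_cancel₀ _ hc]⟩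

lemma LinearIsometryEquiv.image_line (f : E3 ≃ₗᵢ[ℝ] E3) (P v : E3) :
    f '' line P v = line (f P) (f v) := by
  ext q
  constructor
  · rintro ⟨_, ⟨t, rfl⟩, rfl⟩; exact ⟨t, by simp⟩
  · rintro ⟨t, rfl⟩; exact ⟨P + t • v, ⟨t, rfl⟩, by simp⟩

lemma LinearIsometryEquiv.image_cylinder (f : E3 ≃ₗᵢ[ℝ] E3) (l : Set E3) (ρ : ℝ) :
    f '' cylinder l ρ = cylinder (f '' l) ρ := by
  ext q
  obtain ⟨p, rfl⟩ := f.surjective q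
  rw [f.injective.mem_set_image]
  show infDist p l ≤ ρ ↔ infDist (f p) (f '' l) ≤ ρ
  rw [infDist_image f.isometry]

lemma abs_inner_le_dist_mul_norm_of_mem_line {a b u v n p q : E3}
    (hu : ⟪u, n⟫ = 0) (hv : ⟪v, n⟫ = 0) (hp : p ∈ line a u) (hq : q ∈ line b v) :
    |⟪a - b, n⟫| ≤ dist p q * ‖n‖ := by
  obtain ⟨t, rfl⟩ := hp
  obtain ⟨s, rfl⟩ := hq
  have : ⟪a + t • u - (b + s • v), n⟫ = ⟪a - b, n⟫ := by
    simp only [inner_sub_left, inner_add_left, real_inner_smul_left, hu, hv]; ring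
  rw [← this, dist_eq_norm]
  exact abs_real_inner_le_norm _ _

lemma disjoint_cylinder_of_lt_dist {l l' : Set E3} {ρ : ℝ} (hl : IsClosed l) (hl₀ : l.Nonempty)
    (hl' : IsClosed l') (hl'₀ : l'.Nonempty) (h : ∀ x ∈ l, ∀ y ∈ l', 2 * ρ < dist x y) :
    Disjoint (cylinder l ρ) (cylinder l' ρ) := by
  refine Set.disjoint_left.mpr fun p hp hp' => ?_
  obtain ⟨x, hx, hpx⟩ := hl.exists_infDist_eq_dist hl₀ p
  obtain ⟨y, hy, hpy⟩ := hl'.exists_infDist_eq_dist hl'₀ p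
  have := dist_triangle_left x y p
  have := h x hx y hy
  change infDist p l ≤ ρ at hp
  change infDist p l' ≤ ρ at hp'
  linarith

lemma LinearIsometryEquiv.volume_image (f : E3 ≃ₗᵢ[ℝ] E3) (s : Set E3) :
    volume (f '' s) = volume s := by
  rw [f.image_eq_preimage_symm,
    f.symm.measurePreserving.measure_preimage_emb f.symm.toHomeomorph.measurableEmbedding]

lemma volume_cylinder_line_inter_closedBall_eq {P v w : E3} (hv : v ≠ 0) (hw : w ≠ 0)
    (hPv : ⟪P, v⟫ = 0) (hPw : ⟪P, w⟫ = 0) (ρ R : ℝ) :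
    volume (cylinder (line P v) ρ ∩ closedBall 0 R) =
      volume (cylinder (line P w) ρ ∩ closedBall 0 R) := by
  set u := ‖v‖⁻¹ • v
  set u' := ‖w‖⁻¹ • w
  set f := Submodule.reflection (ℝ ∙ (u - u'))ᗮ
  have hfu : f u = u' := Submodule.reflection_sub (by simp [u, u', norm_smul, hv, hw])
  have hfP : f P = P := by
    refine Submodule.reflection_mem_subspace_eq_self
      (Submodule.mem_orthogonal_singleton_iff_inner_left.mpr ?_)
    simp [u, u', inner_sub_right, real_inner_smul_right, hPv, hPw]
  have hline : f '' line P v = line P w := by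
    rw [← line_smul (inv_ne_zero (norm_ne_zero_iff.mpr hv)),
      ← line_smul (inv_ne_zero (norm_ne_zero_iff.mpr hw)) P w, f.image_line, hfP, hfu]
  have hball : f '' closedBall 0 R = closedBall 0 R := by rw [f.image_closedBall, map_zero]
  rw [← f.volume_image, Set.image_inter f.injective, f.image_cylinder, hline, hball]

def tiltDir (μ : ℝ) (a : E3) : E3 := pt (μ * a 1) (-(μ * a 0)) 1

lemma tiltDir_ne_zero (μ : ℝ) (a : E3) : tiltDir μ a ≠ 0 := fun h => by
  simpa [tiltDir] using congrArg (· 2) h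

lemma inner_tiltDir_eq_zero {a : E3} (ha : a 2 = 0) (μ : ℝ) : ⟪a, tiltDir μ a⟫ = 0 := by
  simp only [inner_eq_sum_three, tiltDir, pt_apply_zero, pt_apply_one, pt_apply_two, ha]; ring

lemma eq_of_tiltDir_eq_smul {μ : ℝ} (hμ : μ ≠ 0) {a b : E3} (ha : a 2 = 0) (hb : b 2 = 0) {c : ℝ}
    (h : tiltDir μ b = c • tiltDir μ a) : a = b := by
  have hc : c = 1 := by simpa [tiltDir] using (congrArg (· 2) h).symm
  subst hc
  rw [one_smul] at h
  have h0 := congrArg (· 0) h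
  have h1 := congrArg (· 1) h
  simp only [tiltDir, pt_apply_zero, pt_apply_one, neg_inj, mul_right_inj' hμ] at h0 h1
  ext i; fin_cases i <;> simp [*]

lemma not_parallel_tiltDir {μ : ℝ} (hμ : μ ≠ 0) {a b : E3} (ha : a 2 = 0) (hb : b 2 = 0)
    (hab : a ≠ b) : ¬ Parallel3 (tiltDir μ a) (tiltDir μ b) := by
  rintro ⟨c, h | h⟩
  · exact hab (eq_of_tiltDir_eq_smul hμ ha hb h)
  · exact hab (eq_of_tiltDir_eq_smul hμ hb ha h).symm

lemma dist_sq_le_dist_sq_mul_of_mem_line_tiltDir {μ : ℝ} (hμ : μ ≠ 0) {a b p q : E3}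
    (ha : a 2 = 0) (hb : b 2 = 0) (hp : p ∈ line a (tiltDir μ a)) (hq : q ∈ line b (tiltDir μ b)) :
    dist a b ^ 2 ≤ dist p q ^ 2 * (1 + μ ^ 2 * ‖a‖ ^ 2) := by
  -- the cross product of the two directions
  set n := pt (μ * (b 0 - a 0)) (μ * (b 1 - a 1)) (μ ^ 2 * (a 0 * b 1 - b 0 * a 1))
  have hna : ⟪tiltDir μ a, n⟫ = 0 := by
    simp only [inner_eq_sum_three, tiltDir, n, pt_apply_zero, pt_apply_one, pt_apply_two]; ring
  have hnb : ⟪tiltDir μ b, n⟫ = 0 := by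
    simp only [inner_eq_sum_three, tiltDir, n, pt_apply_zero, pt_apply_one, pt_apply_two]; ring
  have habn : ⟪a - b, n⟫ = -(μ * dist a b ^ 2) := by
    simp only [inner_eq_sum_three, dist_sq_eq_sum_three, n, PiLp.sub_apply, pt_apply_zero,
      pt_apply_one, pt_apply_two, ha, hb]
    ring
  have hn : ‖n‖ ^ 2 ≤ μ ^ 2 * dist a b ^ 2 * (1 + μ ^ 2 * ‖a‖ ^ 2) := by
    simp only [norm_sq_eq_sum_three, dist_sq_eq_sum_three, n, pt_apply_zero, pt_apply_one,
      pt_apply_two, ha, hb]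
    nlinarith [sq_nonneg (μ ^ 2 * (a 0 * (a 0 - b 0) + a 1 * (a 1 - b 1)))]
  have hCS : (μ * dist a b ^ 2) ^ 2 ≤ dist p q ^ 2 * ‖n‖ ^ 2 := by
    rw [← mul_pow, ← sq_abs, ← abs_neg, ← habn]
    exact pow_le_pow_left₀ (abs_nonneg _) (abs_inner_le_dist_mul_norm_of_mem_line hna hnb hp hq) 2
  rcases (dist_nonneg (x := a) (y := b)).eq_or_lt with hab | hab
  · rw [← hab, sq, zero_mul]; positivity
  · refine le_of_mul_le_mul_left ?_ (by positivity : 0 < μ ^ 2 * dist a b ^ 2)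
    calc μ ^ 2 * dist a b ^ 2 * dist a b ^ 2 = (μ * dist a b ^ 2) ^ 2 := by ring
      _ ≤ dist p q ^ 2 * ‖n‖ ^ 2 := hCS
      _ ≤ dist p q ^ 2 * (μ ^ 2 * dist a b ^ 2 * (1 + μ ^ 2 * ‖a‖ ^ 2)) := by gcongr
      _ = μ ^ 2 * dist a b ^ 2 * (dist p q ^ 2 * (1 + μ ^ 2 * ‖a‖ ^ 2)) := by ring

lemma two_mul_mul_one_sub_lt_of_sq_le {r ε d : ℝ} (hr : 0 < r) (hε : 0 < ε) (hd : 0 ≤ d)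
    (h : (2 * r) ^ 2 ≤ d ^ 2 * (1 + ε)) : 2 * (r * (1 - ε)) < d := by
  by_contra! hle
  have h1ε : 0 ≤ 1 - ε := by nlinarith
  have : d ^ 2 * (1 + ε) ≤ (2 * (r * (1 - ε))) ^ 2 * (1 + ε) := by gcongr
  -- `(2r)² - (2r(1 - ε))² (1 + ε) = 4 r² ε (1 + ε (1 - ε))`
  nlinarith [mul_pos (mul_pos hr hr)
    (mul_pos hε (add_pos_of_pos_of_nonneg one_pos (mul_nonneg hε.le h1ε)))]

theorem stmt_1_general (R r : ℝ) (hR : 0 < R) (hr : 0 < r)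
    (A : Set (EuclideanSpace ℝ (Fin 3)))
    (hplane : ∀ p ∈ A, p 2 = 0)
    (hsep : ∀ p ∈ A, ∀ q ∈ A, p ≠ q → 2 * r ≤ dist p q)
    (hbound : ∀ p ∈ A, dist p 0 ≤ R) :
    ∀ ε : ℝ, 0 < ε → ε ≤ 8 * r ^ 2 / R ^ 4 →
      ∃ dir : A → EuclideanSpace ℝ (Fin 3),
        (∀ a : A, dir a ≠ 0) ∧
        (∀ a b : A, a ≠ b → ¬ Parallel3 (dir a) (dir b)) ∧
        (∀ a b : A, a ≠ b →
          Disjoint (interior (cylinder (line ↑a (dir a)) (r * (1 - ε))))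
            (interior (cylinder (line ↑b (dir b)) (r * (1 - ε))))) ∧
        (∀ a : A,
          volume (cylinder (line ↑a (dir a)) (r * (1 - ε)) ∩ closedBall 0 R) =
            volume (cylinder (line ↑a (pt 0 0 1)) (r * (1 - ε)) ∩ closedBall 0 R)) := by
  intro ε hε _
  set μ := √ε / R
  have hμ : μ ≠ 0 := by positivity
  have hμR : μ ^ 2 * R ^ 2 = ε := by
    rw [div_pow, Real.sq_sqrt hε.le, div_mul_cancel₀ _ (by positivity)]
  refine ⟨fun a => tiltDir μ a, fun a => tiltDir_ne_zero μ a, fun a b hab =>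
    not_parallel_tiltDir hμ (hplane a a.2) (hplane b b.2) (Subtype.coe_ne_coe.mpr hab),
    fun a b hab => ?_, fun a => ?_⟩
  · refine Disjoint.mono interior_subset interior_subset <|
      disjoint_cylinder_of_lt_dist (isClosed_line _ _) (line_nonempty _ _) (isClosed_line _ _)
        (line_nonempty _ _) fun p hp q hq => ?_
    have ha : ‖(a : E3)‖ ≤ R := by simpa using hbound a a.2
    refine two_mul_mul_one_sub_lt_of_sq_le hr hε dist_nonneg ?_
    calc (2 * r) ^ 2 ≤ dist (a : E3) b ^ 2 := by
          gcongr; exact hsep a a.2 b b.2 (Subtype.coe_ne_coe.mpr hab)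
      _ ≤ dist p q ^ 2 * (1 + μ ^ 2 * ‖(a : E3)‖ ^ 2) :=
          dist_sq_le_dist_sq_mul_of_mem_line_tiltDir hμ (hplane a a.2) (hplane b b.2) hp hq
      _ ≤ dist p q ^ 2 * (1 + ε) := by rw [← hμR]; gcongr
  · refine volume_cylinder_line_inter_closedBall_eq (tiltDir_ne_zero μ a) ?_
      (inner_tiltDir_eq_zero (hplane a a.2) μ) ?_ _ _
    · exact fun h => by simpa using congrArg (· 2) h
    · simp [inner_eq_sum_three, hplane a a.2]

theorem stmt_1 (R r : ℝ) (hR : 0 < R) (hr : 0 < r)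
    (A : Set (EuclideanSpace ℝ (Fin 3))) (hcount : A.Countable)
    (hplane : ∀ p ∈ A, p 2 = 0)
    (hsep : ∀ p ∈ A, ∀ q ∈ A, p ≠ q → 2 * r ≤ dist p q)
    (hbound : ∀ p ∈ A, dist p 0 ≤ R) :
    ∀ ε : ℝ, 0 < ε → ε ≤ 8 * r ^ 2 / R ^ 4 →
      ∃ dir : A → EuclideanSpace ℝ (Fin 3),
        (∀ a : A, dir a ≠ 0) ∧
        (∀ a b : A, a ≠ b → ¬ Parallel3 (dir a) (dir b)) ∧
        (∀ a b : A, a ≠ b →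
          Disjoint (interior (cylinder (line ↑a (dir a)) (r * (1 - ε))))
            (interior (cylinder (line ↑b (dir b)) (r * (1 - ε))))) ∧
        (∀ a : A,
          volume (cylinder (line ↑a (dir a)) (r * (1 - ε)) ∩ closedBall 0 R) =
            volume (cylinder (line ↑a (pt 0 0 1)) (r * (1 - ε)) ∩ closedBall 0 R)) :=
  stmt_1_general R r hR hr A hplane hsep hbound
end
end

section
/- For any countable family of lines in ℝ³, there exists a plane in ℝ³ that intersects every line of the family. -/
/-!
Choose a normal vector `n` orthogonal to none of the (countably many) direction vectors of the
lines: this is possible by Baire's theorem, since each `(ℝ ∙ v)ᗮ` is a closed proper subspace.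
Then every line `P + t • v` crosses the plane `(ℝ ∙ n)ᗮ` at `t = -⟪n, P⟫ / ⟪n, v⟫`.
-/

open Metric MeasureTheory Filter Matrix
open scoped RealInnerProductSpace

noncomputable section

open scoped Topology in
theorem Submodule.exists_forall_notMem_of_countable {R M ι : Type*} [Ring R] [TopologicalSpace R]
    [AddCommGroup M] [Module R M] [TopologicalSpace M] [ContinuousAdd M] [ContinuousSMul R M]
    [BaireSpace M] [NeBot (𝓝[{x : R | IsUnit x}] 0)] [Countable ι] (p : ι → Submodule R M)
    (hclosed : ∀ i, IsClosed (p i : Set M)) (hne : ∀ i, p i ≠ ⊤) :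
    ∃ x : M, ∀ i, x ∉ p i := by
  by_contra! hcover
  obtain ⟨i, hi⟩ := nonempty_interior_of_iUnion_of_closed hclosed
    (Set.eq_univ_of_forall fun x => Set.mem_iUnion.mpr (hcover x))
  exact hne i ((p i).eq_top_of_nonempty_interior' hi)

theorem exists_forall_inner_ne_zero {E ι : Type*} [NormedAddCommGroup E] [InnerProductSpace ℝ E]
    [CompleteSpace E] [Countable ι] (v : ι → E) (hv : ∀ i, v i ≠ 0) :
    ∃ n : E, ∀ i, ⟪n, v i⟫ ≠ 0 := by
  have hne : ∀ i, (ℝ ∙ v i)ᗮ ≠ ⊤ := fun i htop =>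
    hv i <| inner_self_eq_zero.mp <| Submodule.mem_orthogonal_singleton_iff_inner_left.mp
      (htop ▸ Submodule.mem_top)
  obtain ⟨n, hn⟩ := Submodule.exists_forall_notMem_of_countable _
    (fun i => Submodule.isClosed_orthogonal _) hne
  exact ⟨n, fun i => mt Submodule.mem_orthogonal_singleton_iff_inner_left.mpr (hn i)⟩

theorem exists_ne_zero_forall_inner_ne_zero {E ι : Type*} [NormedAddCommGroup E]
    [InnerProductSpace ℝ E] [CompleteSpace E] [Nontrivial E] [Countable ι] (v : ι → E)
    (hv : ∀ i, v i ≠ 0) : ∃ n : E, n ≠ 0 ∧ ∀ i, ⟪n, v i⟫ ≠ 0 := by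
  obtain ⟨e, he⟩ := exists_ne (0 : E)
  obtain ⟨n, hn⟩ := exists_forall_inner_ne_zero (fun o : Option ι => o.elim e v)
    (Option.rec he hv)
  exact ⟨n, fun h0 => hn none (by simp [h0]), fun i => hn (some i)⟩

theorem exists_add_smul_mem_orthogonal_span_singleton {E : Type*} [NormedAddCommGroup E]
    [InnerProductSpace ℝ E] {n v : E} (P : E) (hnv : ⟪n, v⟫ ≠ 0) :
    ∃ t : ℝ, P + t • v ∈ (ℝ ∙ n)ᗮ := by
  refine ⟨-⟪n, P⟫ / ⟪n, v⟫, Submodule.mem_orthogonal_singleton_iff_inner_right.mpr ?_⟩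
  rw [inner_add_right, real_inner_smul_right, div_mul_cancel₀ _ hnv, add_neg_cancel]

theorem stmt_4 (S : Set (Set (EuclideanSpace ℝ (Fin 3)))) (hS : S.Countable)
    (hlines : ∀ l ∈ S, ∃ P v : EuclideanSpace ℝ (Fin 3), v ≠ 0 ∧ l = line P v) :
    ∃ s : AffineSubspace ℝ (EuclideanSpace ℝ (Fin 3)),
      Module.finrank ℝ s.direction = 2 ∧ (s : Set (EuclideanSpace ℝ (Fin 3))).Nonempty ∧
      ∀ l ∈ S, (l ∩ (s : Set (EuclideanSpace ℝ (Fin 3)))).Nonempty := by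
  choose! P v hv hl using hlines
  have : Countable S := hS.to_subtype
  obtain ⟨n, hn0, hn⟩ :=
    exists_ne_zero_forall_inner_ne_zero (fun l : S => v l) fun l => hv l l.2
  have : Fact (Module.finrank ℝ (EuclideanSpace ℝ (Fin 3)) = 2 + 1) :=
    ⟨finrank_euclideanSpace_fin⟩
  refine ⟨(ℝ ∙ n)ᗮ.toAffineSubspace, ?_, ⟨0, Submodule.zero_mem _⟩, fun l hlS => ?_⟩
  · rw [Submodule.toAffineSubspace_direction]
    exact Submodule.finrank_orthogonal_span_singleton hn0
  · obtain ⟨t, ht⟩ := exists_add_smul_mem_orthogonal_span_singleton (P l) (hn ⟨l, hlS⟩)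
    have hmem : P l + t • v l ∈ line (P l) (v l) := ⟨t, rfl⟩
    rw [← hl l hlS] at hmem
    exact ⟨_, hmem, ht⟩
end
end

section
/- The function φ(x) = (2x⁴/(x + 1)²) · (1 − cos(π/(3x))) is increasing on the interval [32, ∞), and lim_{x→∞} φ(x) = π²/9. -/
/-!
With `u = π / (6x)`, the identity `1 - cos 2u = 2 sin² u` gives
`φ(x) = (π/3 · x/(x+1) · sinc u)²`. For `x ≥ 1/6` both factors are nonnegative and strictly
increasing in `x`: `x/(x+1)` obviously, and `sinc (π/(6x))` because `sinc` strictly decreases on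
`[0, π]`, where its derivative `(u cos u - sin u)/u²` is negative (`tan u > u` below `π/2`).
As `x → ∞` both factors tend to `1`, so `φ(x) → (π/3)²`.
-/

open Filter Real Set Topology

namespace Real

lemma mul_cos_lt_sin {u : ℝ} (h0 : 0 < u) (hπ : u < π) : u * cos u < sin u := by
  rcases lt_or_ge u (π / 2) with hu | hu
  · have hcos : 0 < cos u := cos_pos_of_mem_Ioo ⟨by linarith, hu⟩
    have htan := lt_tan h0 hu
    rwa [tan_eq_sin_div_cos, lt_div_iff₀ hcos] at htan
  · have hcos : cos u ≤ 0 := cos_nonpos_of_pi_div_two_le_of_le hu (by linarith)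
    nlinarith [sin_pos_of_pos_of_lt_pi h0 hπ]

lemma hasDerivAt_sinc {u : ℝ} (hu : u ≠ 0) :
    HasDerivAt sinc ((u * cos u - sin u) / u ^ 2) u := by
  have h := (hasDerivAt_sin u).div (hasDerivAt_id u) hu
  refine (h.congr_deriv (by simp only [id, mul_one]; ring)).congr_of_eventuallyEq ?_
  filter_upwards [eventually_ne_nhds hu] with y hy
  simp [sinc_of_ne_zero hy]

lemma strictAntiOn_sinc : StrictAntiOn sinc (Icc 0 π) := by
  refine strictAntiOn_of_deriv_neg (convex_Icc 0 π) continuous_sinc.continuousOn fun u hu => ?_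
  rw [interior_Icc] at hu
  rw [(hasDerivAt_sinc hu.1.ne').deriv]
  exact div_neg_of_neg_of_pos (sub_neg.2 (mul_cos_lt_sin hu.1 hu.2)) (by positivity [hu.1.ne'])

lemma sinc_nonneg {u : ℝ} (h0 : 0 ≤ u) (hπ : u ≤ π) : 0 ≤ sinc u := by
  rcases h0.eq_or_lt with rfl | h0
  · simp
  · rw [sinc_of_ne_zero h0.ne']
    exact div_nonneg (sin_nonneg_of_nonneg_of_le_pi h0.le hπ) h0.le

end Real

lemma div_mem_Icc_zero_pi {a x : ℝ} (ha : 0 < a) (hx : a / π ≤ x) : a / x ∈ Icc 0 π := by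
  have hx0 : 0 < x := (div_pos ha pi_pos).trans_le hx
  refine ⟨by positivity, ?_⟩
  rw [div_le_iff₀ hx0]
  rw [div_le_iff₀ pi_pos] at hx
  linarith

lemma strictMonoOn_sinc_div {a : ℝ} (ha : 0 < a) :
    StrictMonoOn (fun x => sinc (a / x)) (Ici (a / π)) := by
  intro x hx y hy hxy
  exact strictAntiOn_sinc (div_mem_Icc_zero_pi ha hy) (div_mem_Icc_zero_pi ha hx)
    (div_lt_div_of_pos_left ha ((div_pos ha pi_pos).trans_le hx) hxy)

lemma strictMonoOn_div_add_one : StrictMonoOn (fun x : ℝ => x / (x + 1)) (Ioi (-1)) := by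
  intro x hx y hy hxy
  rw [mem_Ioi] at hx hy
  rw [div_lt_div_iff₀ (by linarith) (by linarith)]
  linarith

lemma tendsto_div_add_one_atTop : Tendsto (fun x : ℝ => x / (x + 1)) atTop (𝓝 1) := by
  have h : Tendsto (fun x : ℝ => 1 - (x + 1)⁻¹) atTop (𝓝 (1 - 0)) :=
    tendsto_const_nhds.sub
      (tendsto_inv_atTop_zero.comp (tendsto_atTop_add_const_right _ 1 tendsto_id))
  rw [sub_zero] at h
  refine h.congr' ?_
  filter_upwards [eventually_gt_atTop 0] with x hx
  field_simp
  ring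

noncomputable def phi (x : ℝ) : ℝ := 2 * x ^ 4 / (x + 1) ^ 2 * (1 - cos (π / (3 * x)))

lemma phi_eq_sq {x : ℝ} (hx : x ≠ 0) :
    phi x = (π / 3 * (x / (x + 1)) * sinc (π / 6 / x)) ^ 2 := by
  rcases eq_or_ne (x + 1) 0 with hx1 | hx1
  · simp [phi, hx1]
  set u := π / 6 / x with hu_def
  have hu : u ≠ 0 := by positivity [pi_pos.ne', hx]
  have h : π / (3 * x) = 2 * u := by rw [hu_def]; field_simp; ring
  have hπ : π = 6 * x * u := by rw [hu_def]; field_simp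
  rw [phi, h, cos_two_mul', cos_sq', sinc_of_ne_zero hu, hπ]
  field_simp
  ring

lemma strictMonoOn_phi : StrictMonoOn phi (Ici (1 / 6)) := by
  have hπ6 : 0 < π / 6 := by positivity
  rw [show (1 : ℝ) / 6 = π / 6 / π by field_simp]
  intro x hx y hy hxy
  have hx0 : 0 < x := (div_pos hπ6 pi_pos).trans_le hx
  have hy0 : 0 < y := hx0.trans hxy
  have hfrac : π / 3 * (x / (x + 1)) < π / 3 * (y / (y + 1)) :=
    mul_lt_mul_of_pos_left
      (strictMonoOn_div_add_one (mem_Ioi.2 (by linarith)) (mem_Ioi.2 (by linarith)) hxy)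
      (by positivity)
  have hsinc_nonneg : 0 ≤ sinc (π / 6 / x) :=
    sinc_nonneg (by positivity) (div_mem_Icc_zero_pi hπ6 hx).2
  rw [phi_eq_sq hx0.ne', phi_eq_sq hy0.ne']
  exact pow_lt_pow_left₀
    (mul_lt_mul'' hfrac (strictMonoOn_sinc_div hπ6 hx hy hxy) (by positivity) hsinc_nonneg)
    (by positivity) two_ne_zero

lemma tendsto_phi_atTop : Tendsto phi atTop (𝓝 (π ^ 2 / 9)) := by
  have hu : Tendsto (fun x : ℝ => π / 6 / x) atTop (𝓝 0) :=
    tendsto_const_nhds.div_atTop tendsto_id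
  have h := ((tendsto_const_nhds (x := π / 3)).mul tendsto_div_add_one_atTop).mul
    ((continuous_sinc.tendsto 0).comp hu)
  rw [sinc_zero, show π / 3 * 1 * 1 = π / 3 by ring] at h
  rw [show π ^ 2 / 9 = (π / 3) ^ 2 by ring]
  refine (h.pow 2).congr' ?_
  filter_upwards [eventually_gt_atTop 0] with x hx
  exact (phi_eq_sq hx.ne').symm

theorem stmt_11 :
    StrictMonoOn
        (fun x : ℝ => 2 * x ^ 4 / (x + 1) ^ 2 * (1 - Real.cos (Real.pi / (3 * x))))
        (Set.Ici (32 : ℝ)) ∧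
      Tendsto (fun x : ℝ => 2 * x ^ 4 / (x + 1) ^ 2 * (1 - Real.cos (Real.pi / (3 * x))))
        atTop (nhds (Real.pi ^ 2 / 9)) :=
  ⟨strictMonoOn_phi.mono (Ici_subset_Ici.2 (by norm_num)), tendsto_phi_atTop⟩
end

section
/- Let L > 0 and K > 0 be real numbers, and let A₁ = (x₁, y₁, 0) and A₂ = (x₂, y₂, 0) be two distinct points in the xy-plane of ℝ³, both different from the origin. Set dᵢ = √(xᵢ² + yᵢ²) and vᵢ = (yᵢ, −xᵢ, K·dᵢ + L) for i = 1, 2. Then v₁ and v₂ are not scalar multiples of each other; that is, the lines through A₁ and A₂ with direction vectors v₁ and v₂ respectively are not parallel. -/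
open Metric MeasureTheory Filter Matrix
open scoped RealInnerProductSpace

noncomputable section

theorem Real.sqrt_mul_sq_add_mul_sq {c : ℝ} (hc : 0 ≤ c) (x y : ℝ) :
    √((c * x) ^ 2 + (c * y) ^ 2) = c * √(x ^ 2 + y ^ 2) := by
  rw [show (c * x) ^ 2 + (c * y) ^ 2 = c ^ 2 * (x ^ 2 + y ^ 2) by ring,
    Real.sqrt_mul (sq_nonneg c), Real.sqrt_sq hc]

def coneDirection (K L x y : ℝ) : EuclideanSpace ℝ (Fin 3) :=
  pt y (-x) (K * √(x ^ 2 + y ^ 2) + L)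

/-- Both third components are positive, so `c > 0`; then `c` scales `K d` but not `L` in the
third component of `coneDirection K L x₂ y₂`, forcing `c = 1`. -/
theorem eq_of_smul_coneDirection_eq {K L c x₁ y₁ x₂ y₂ : ℝ} (hK : 0 ≤ K) (hL : 0 < L)
    (h : coneDirection K L x₂ y₂ = c • coneDirection K L x₁ y₁) :
    x₂ = x₁ ∧ y₂ = y₁ := by
  obtain ⟨hy, hnegx, hz⟩ := pt_inj.1 ((smul_pt ..).symm ▸ h)
  have hx : x₂ = c * x₁ := by linarith
  rw [hx, hy] at hz
  have hc : 0 < c := by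
    have hpos : 0 < c * (K * √(x₁ ^ 2 + y₁ ^ 2) + L) := hz ▸ by positivity
    exact pos_of_mul_pos_left hpos (by positivity)
  rw [Real.sqrt_mul_sq_add_mul_sq hc.le] at hz
  have hc1 : c = 1 := by nlinarith
  subst hc1
  constructor <;> linarith

theorem stmt_12_general (L K x₁ y₁ x₂ y₂ d₁ d₂ : ℝ) (hL : 0 < L) (hK : 0 < K)
    (hne : pt x₁ y₁ 0 ≠ pt x₂ y₂ 0)
    (hd₁ : d₁ = Real.sqrt (x₁ ^ 2 + y₁ ^ 2))
    (hd₂ : d₂ = Real.sqrt (x₂ ^ 2 + y₂ ^ 2)) :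
    ¬ Parallel3 (pt y₁ (-x₁) (K * d₁ + L)) (pt y₂ (-x₂) (K * d₂ + L)) := by
  subst hd₁ hd₂
  rintro ⟨c, h | h⟩
  · obtain ⟨rfl, rfl⟩ := eq_of_smul_coneDirection_eq (c := c) hK.le hL h
    exact hne rfl
  · obtain ⟨rfl, rfl⟩ := eq_of_smul_coneDirection_eq (c := c) hK.le hL h
    exact hne rfl

theorem stmt_12 (L K x₁ y₁ x₂ y₂ d₁ d₂ : ℝ) (hL : 0 < L) (hK : 0 < K)
    (hne : pt x₁ y₁ 0 ≠ pt x₂ y₂ 0)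
    (h₁ : pt x₁ y₁ 0 ≠ pt 0 0 0) (h₂ : pt x₂ y₂ 0 ≠ pt 0 0 0)
    (hd₁ : d₁ = Real.sqrt (x₁ ^ 2 + y₁ ^ 2))
    (hd₂ : d₂ = Real.sqrt (x₂ ^ 2 + y₂ ^ 2)) :
    ¬ Parallel3 (pt y₁ (-x₁) (K * d₁ + L)) (pt y₂ (-x₂) (K * d₂ + L)) :=
  stmt_12_general L K x₁ y₁ x₂ y₂ d₁ d₂ hL hK hne hd₁ hd₂
end
end

section
/- Let L = 7 and K = 4√3. Let d₁ ≤ d₂ be positive integers and let c be a real number satisfying 1 − c ≥ (L²/K²)·(d₂ + 1)²/(2d₂⁴). Then Δ' ≥ 0, where Δ' = (K²/2)·(1 − c)·d₁d₂·(d₁ + d₂)² + K·L·(d₁ + d₂)·((d₂ − d₁)² − 1) + L²·(2d₂² − 5d₁d₂ + 2d₁² − 1). -/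
/-!
Multiplying the hypothesis on `c` by `2K²y⁴` bounds the `K²` term of `Δ'` below by
`L² x (y+1)² (x+y)² / (4y³)`. On the diagonal `x = y` what is left is `2Lx(L - K)`, which is
nonnegative as `4√3 ≤ 7`. Off the diagonal `(y - x)² ≥ 1`, so the `KL` term may be lowered to
`(4/7) L²` times the same factor (as `4 ≤ 4√3`), leaving `L²/(196 y³)` times a polynomial in
`x, y` with positive coefficients in `x - 1` and `y - x - 1`.
-/

open scoped NNReal

/-- The quantity `Δ'` with `a = 1 - c`, `x = d₁`, `y = d₂`. -/
noncomputable def deltaPrime (K L a x y : ℝ) : ℝ :=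
  K ^ 2 / 2 * a * x * y * (x + y) ^ 2 + K * L * (x + y) * ((y - x) ^ 2 - 1) +
    L ^ 2 * (2 * y ^ 2 - 5 * x * y + 2 * x ^ 2 - 1)

theorem deltaPrime_self_nonneg {K L a x : ℝ} (hx : 0 ≤ x) (hL : 0 ≤ L) (hKL : K ≤ L)
    (ha : L ^ 2 * (x + 1) ^ 2 ≤ 2 * K ^ 2 * x ^ 4 * a) : 0 ≤ deltaPrime K L a x x := by
  have hLK : 0 ≤ L - K := sub_nonneg.2 hKL
  calc 0 ≤ 2 * L * x * (L - K) := by positivity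
    _ = L ^ 2 * (x + 1) ^ 2 - 2 * K * L * x - L ^ 2 * (x ^ 2 + 1) := by ring
    _ ≤ 2 * K ^ 2 * x ^ 4 * a - 2 * K * L * x - L ^ 2 * (x ^ 2 + 1) := by gcongr
    _ = deltaPrime K L a x x := by unfold deltaPrime; ring

/-- In the variables `x = 1 + u`, `y = 2 + u + v` every coefficient is positive. -/
theorem poly_nonneg_of_add_one_le {x y : ℝ} (hx : 1 ≤ x) (hxy : x + 1 ≤ y) :
    0 ≤ 49 * x * (y + 1) ^ 2 * (x + y) ^ 2 + 112 * y ^ 3 * (x + y) * ((y - x) ^ 2 - 1) +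
      196 * y ^ 3 * (2 * y ^ 2 - 5 * x * y + 2 * x ^ 2 - 1) := by
  obtain ⟨u, hu, rfl⟩ : ∃ u, 0 ≤ u ∧ x = 1 + u := ⟨x - 1, by linarith, by ring⟩
  obtain ⟨v, hv, rfl⟩ : ∃ v, 0 ≤ v ∧ y = 2 + u + v := ⟨y - 2 - u, by linarith, by ring⟩
  lift u to ℝ≥0 using hu
  lift v to ℝ≥0 using hv
  ring_nf
  positivity

theorem deltaPrime_nonneg_of_add_one_le {K L a x y : ℝ} (hL : 0 ≤ L) (hKL : 4 * L ≤ 7 * K)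
    (ha : L ^ 2 * (y + 1) ^ 2 ≤ 2 * K ^ 2 * y ^ 4 * a) (hx : 1 ≤ x) (hxy : x + 1 ≤ y) :
    0 ≤ deltaPrime K L a x y := by
  have hy : 0 < y := by linarith
  have hT : 0 ≤ y ^ 3 * (x + y) * ((y - x) ^ 2 - 1) := by
    have : 1 ≤ (y - x) ^ 2 := by nlinarith
    have : 0 < x + y := by linarith
    positivity
  have h₁ := mul_le_mul_of_nonneg_right ha (by positivity : 0 ≤ x * (x + y) ^ 2)
  have h₂ := mul_le_mul_of_nonneg_right (mul_le_mul_of_nonneg_right hKL hL) hT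
  have h₃ := mul_nonneg (sq_nonneg L) (poly_nonneg_of_add_one_le hx hxy)
  have : 0 ≤ 196 * y ^ 3 * deltaPrime K L a x y := by
    unfold deltaPrime
    linear_combination 49 * h₁ + 28 * h₂ + h₃
  exact nonneg_of_mul_nonneg_right this (by positivity)

theorem stmt_15 (L K : ℝ) (hL : L = 7) (hK : K = 4 * Real.sqrt 3)
    (d₁ d₂ : ℕ) (hd₁ : 0 < d₁) (hle : d₁ ≤ d₂) (c : ℝ)
    (hc : L ^ 2 / K ^ 2 * ((d₂ : ℝ) + 1) ^ 2 / (2 * (d₂ : ℝ) ^ 4) ≤ 1 - c) :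
    0 ≤ K ^ 2 / 2 * (1 - c) * (d₁ : ℝ) * (d₂ : ℝ) * ((d₁ : ℝ) + (d₂ : ℝ)) ^ 2 +
        K * L * ((d₁ : ℝ) + (d₂ : ℝ)) * (((d₂ : ℝ) - (d₁ : ℝ)) ^ 2 - 1) +
        L ^ 2 * (2 * (d₂ : ℝ) ^ 2 - 5 * (d₁ : ℝ) * (d₂ : ℝ) + 2 * (d₁ : ℝ) ^ 2 - 1) := by
  subst hL hK
  have hs₁ : 1 ≤ √3 := Real.one_le_sqrt.2 (by norm_num)
  have hs₂ : √3 ≤ 7 / 4 := Real.sqrt_le_iff.2 ⟨by norm_num, by norm_num⟩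
  have hy : (0 : ℝ) < d₂ := by exact_mod_cast hd₁.trans_le hle
  have ha : 7 ^ 2 * ((d₂ : ℝ) + 1) ^ 2 ≤ 2 * (4 * √3) ^ 2 * (d₂ : ℝ) ^ 4 * (1 - c) := by
    rw [div_mul_eq_mul_div, div_div, div_le_iff₀ (by positivity)] at hc
    linarith
  change 0 ≤ deltaPrime (4 * √3) 7 (1 - c) d₁ d₂
  rcases hle.eq_or_lt with rfl | hlt
  · exact deltaPrime_self_nonneg hy.le (by norm_num) (by linarith) ha
  · exact deltaPrime_nonneg_of_add_one_le (by norm_num) (by linarith) ha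
      (by exact_mod_cast hd₁) (by exact_mod_cast hlt)
end
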